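/- arXiv:2604.06868 — 3 statements merged into one kernel-verified Lean document; each statement's English description precedes it below -/
import Mathlib

section
/- (Lemma 1, sc-cLTL satisfaction decomposition.) Let Σ be a finite alphabet, L ⊆ Σ^ω a language such that the empty word is not a good prefix of L, let P be a probability measure on ℕ → Σ equipped with the product σ-algebra of the discrete σ-algebra on Σ, and let T ∈ ℕ. Then P{ω : ℕ → Σ | ∃ t ≤ T, ω_{[0,t]} ∈ W(L)} = ∑_{w ∈ W(L), |w| ≤ T+1} P(C_w), where the sum ranges over the (finitely many) words in W(L) of length at most T+1. -/
open MeasureTheory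

/-- A finite word `w` is a prefix of an infinite word `ω`. -/
def IsPrefixOfInf {A : Type*} (w : List A) (ω : ℕ → A) : Prop :=
  ∀ k : ℕ, ∀ h : k < w.length, ω k = w.get ⟨k, h⟩

/-- The prefix `ω_{[0,t]}` of the infinite word `ω`, of length `t+1`. -/
def prefixWord {A : Type*} (ω : ℕ → A) (t : ℕ) : List A :=
  List.ofFn (fun k : Fin (t + 1) => ω k)

/-- `w` is a proper prefix of the finite word `w'`. -/
def ProperPrefix {A : Type*} (w w' : List A) : Prop :=
  ∃ u : List A, u ≠ [] ∧ w' = w ++ u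

/-- A good prefix of a language `L` of infinite words. -/
def GoodPrefix {A : Type*} (L : Set (ℕ → A)) (w : List A) : Prop :=
  ∀ ω : ℕ → A, IsPrefixOfInf w ω → ω ∈ L

/-- The witness set `W(L)`: good prefixes none of whose proper prefixes is good. -/
def witnessSet {A : Type*} (L : Set (ℕ → A)) : Set (List A) :=
  {w | GoodPrefix L w ∧ ∀ v : List A, ProperPrefix v w → ¬ GoodPrefix L v}

/-- The cylinder set of a finite word `w`. -/
def cyl {A : Type*} (w : List A) : Set (ℕ → A) :=
  {ω | IsPrefixOfInf w ω}

lemma measurable_cyl {A : Type*} [MeasurableSpace A] [DiscreteMeasurableSpace A]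
    (w : List A) : MeasurableSet (cyl w) := by
  have h : cyl w = ⋂ k : Fin w.length, (fun ω : ℕ → A => ω k) ⁻¹' {w.get k} := by
    ext ω
    simp only [cyl, IsPrefixOfInf, Set.mem_iInter, Set.mem_preimage, Set.mem_singleton_iff,
      Set.mem_setOf_eq]
    constructor
    · intro hp k; exact hp k k.isLt
    · intro hp k hk; exact hp ⟨k, hk⟩
  rw [h]
  exact MeasurableSet.iInter fun k =>
    (measurable_pi_apply (k : ℕ)) (MeasurableSet.singleton _)

/-- Two comparable words in the witness set are equal. -/
lemma witness_eq_of_common_ext {A : Type*} {L : Set (ℕ → A)} {w v : List A}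
    (hw : w ∈ witnessSet L) (hv : v ∈ witnessSet L) {ω : ℕ → A}
    (hωw : IsPrefixOfInf w ω) (hωv : IsPrefixOfInf v ω) : w = v := by
  wlog hle : w.length ≤ v.length generalizing w v
  · exact (this hv hw hωv hωw (le_of_not_ge hle)).symm
  -- w is a prefix of v
  have hpre : w <+: v := by
    refine List.prefix_iff_eq_take.2 ?_
    apply List.ext_get (by simp [List.length_take, Nat.min_eq_left hle])
    intro n h1 h2
    have e1 := hωw n h1
    have e2 := hωv n (lt_of_lt_of_le h1 hle)
    simp only [List.get_eq_getElem, List.getElem_take] at e1 e2 ⊢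
    rw [← e1, ← e2]
  rcases hpre with ⟨u, rfl⟩
  rcases eq_or_ne u [] with rfl | hu
  · simp
  · exact absurd hw.1 (hv.2 w ⟨u, hu, rfl⟩)

theorem satisfaction_decomposition {A : Type*} [Fintype A]
    [MeasurableSpace A] [DiscreteMeasurableSpace A]
    (L : Set (ℕ → A)) (h_empty : ¬ GoodPrefix L ([] : List A))
    (P : Measure (ℕ → A)) [IsProbabilityMeasure P] (T : ℕ) :
    P {ω : ℕ → A | ∃ t ≤ T, prefixWord ω t ∈ witnessSet L} =
      ∑' w : {w : List A // w ∈ witnessSet L ∧ w.length ≤ T + 1}, P (cyl w.val) := by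
  classical
  have hcount : Countable A := Fintype.toEncodable A |>.countable
  set I := {w : List A // w ∈ witnessSet L ∧ w.length ≤ T + 1}
  have hset : {ω : ℕ → A | ∃ t ≤ T, prefixWord ω t ∈ witnessSet L} =
      ⋃ w : I, cyl w.val := by
    ext ω
    simp only [Set.mem_setOf_eq, Set.mem_iUnion]
    constructor
    · rintro ⟨t, ht, hw⟩
      refine ⟨⟨prefixWord ω t, hw, by simp [prefixWord]; omega⟩, ?_⟩
      intro k hk
      simp only [prefixWord] at hk ⊢
      rw [List.get_ofFn]
      rfl
    · rintro ⟨⟨w, hw, hlen⟩, hmem⟩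
      have hne : w ≠ [] := by
        rintro rfl; exact h_empty hw.1
      have hpos : 0 < w.length := List.length_pos_iff.2 hne
      refine ⟨w.length - 1, by omega, ?_⟩
      have : prefixWord ω (w.length - 1) = w := by
        apply List.ext_get (by simp [prefixWord]; omega)
        intro n h1 h2
        simp only [prefixWord] at h1 ⊢
        rw [List.get_ofFn]
        simp only [Fin.coe_cast]
        exact (show IsPrefixOfInf w ω from hmem) n h2
      rw [this]; exact hw
  rw [hset]
  refine measure_iUnion ?_ fun w => measurable_cyl w.val
  rintro ⟨w, hw⟩ ⟨v, hv⟩ hne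
  simp only [Function.onFun, Set.disjoint_left]
  intro ω hωw hωv
  exact hne (Subtype.ext (witness_eq_of_common_ext hw.1 hv.1 hωw hωv))
end

section
/- (Proposition 1, agent-wise factorization of witness probabilities.) Consider a homogeneous multi-agent system of N agents sharing a finite labeled controlled Markov chain (X_c, A_c, T_c, L_c : X_c → Σ_c), with per-agent time-varying policies π^i : ℕ → X_c → A_c for i ∈ Fin N. Let t ∈ ℕ, let l : Fin (t+1) → (Fin N → Σ_c) be a joint word, and let x_0 : Fin N → X_c be an initial joint state. Then ∑_{x} ∏_{k=0}^{t-1} ∏_{i} T_c(x k i, π^i(k)(x k i), x (k+1) i) = ∏_{i} P(l^i, x_0 i, π^i), where the outer sum ranges over all joint paths x : Fin (t+1) → (Fin N → X_c) with x 0 = x_0 and L_c(x k i) = l k i for all k and i, l^i : Fin (t+1) → Σ_c denotes the projection k ↦ l k i, and P(l^i, x_0 i, π^i) is the per-agent witness probability. -/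
/-!
A joint path `Fin (t+1) → Fin N → Xc` is the same thing as an `N`-tuple of individual paths.
Along this transposition both the labelling indicator and the transition weight of a joint path
split into a product of per-agent factors, so distributivity turns the sum over joint paths of
these products into the product over agents of the per-agent sums.
-/

open scoped Classical

/-- Per-agent witness probability: the probability that the controlled single-agent
chain started at `y0` generates the word `l` over the first `t+1` steps. -/
noncomputable def witnessP {Xc Ac Sc : Type*} [Fintype Xc]
    (Tc : Xc → Ac → Xc → NNReal) (Lc : Xc → Sc) (π : ℕ → Xc → Ac)
    (t : ℕ) (l : Fin (t + 1) → Sc) (y0 : Xc) : NNReal :=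
  ∑ y : Fin (t + 1) → Xc,
    (if y 0 = y0 ∧ (∀ k : Fin (t + 1), Lc (y k) = l k) then 1 else 0) *
      ∏ k : Fin t, Tc (y k.castSucc) (π k.val (y k.castSucc)) (y k.succ)

theorem Fintype.sum_prod_transpose_eq_prod_sum {ι κ X R : Type*} [Fintype ι] [DecidableEq ι]
    [Fintype κ] [DecidableEq κ] [Fintype X] [CommSemiring R] (f : ι → (κ → X) → R) :
    ∑ x : κ → ι → X, ∏ i, f i (fun k => x k i) = ∏ i, ∑ y : κ → X, f i y := by
  rw [Fintype.prod_sum]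
  exact Fintype.sum_equiv (Equiv.piComm fun _ _ => X) _ _ fun _ => rfl

theorem witness_probability_factorizes_general {Xc Ac Sc : Type*} [Fintype Xc]
    (Tc : Xc → Ac → Xc → NNReal) (Lc : Xc → Sc)
    (N : ℕ) (π : Fin N → ℕ → Xc → Ac) (t : ℕ)
    (l : Fin (t + 1) → Fin N → Sc) (x0 : Fin N → Xc) :
    (∑ x : Fin (t + 1) → Fin N → Xc,
        (if x 0 = x0 ∧ (∀ (k : Fin (t + 1)) (i : Fin N), Lc (x k i) = l k i) then 1 else 0) *
          ∏ k : Fin t, ∏ i : Fin N,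
            Tc (x k.castSucc i) (π i k.val (x k.castSucc i)) (x k.succ i))
      = ∏ i : Fin N, witnessP Tc Lc (π i) t (fun k => l k i) (x0 i) := by
  unfold witnessP
  refine Eq.trans ?_ (Fintype.sum_prod_transpose_eq_prod_sum _)
  refine Fintype.sum_congr _ _ fun x => ?_
  have hcond : (x 0 = x0 ∧ ∀ k i, Lc (x k i) = l k i) ↔
      ∀ i, x 0 i = x0 i ∧ ∀ k, Lc (x k i) = l k i := by
    rw [funext_iff, forall_comm (α := Fin (t + 1)), ← forall_and]
  rw [Finset.prod_mul_distrib, Finset.prod_comm (s := Finset.univ (α := Fin t))]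
  congr 1
  simp only [Fintype.prod_boole]
  convert if_congr hcond rfl rfl

theorem witness_probability_factorizes {Xc Ac Sc : Type*} [Fintype Xc]
    (Tc : Xc → Ac → Xc → NNReal) (Lc : Xc → Sc)
    (hrow : ∀ x a, ∑ x' : Xc, Tc x a x' = 1)
    (N : ℕ) (π : Fin N → ℕ → Xc → Ac) (t : ℕ)
    (l : Fin (t + 1) → Fin N → Sc) (x0 : Fin N → Xc) :
    (∑ x : Fin (t + 1) → Fin N → Xc,
        (if x 0 = x0 ∧ (∀ (k : Fin (t + 1)) (i : Fin N), Lc (x k i) = l k i) then 1 else 0) *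
          ∏ k : Fin t, ∏ i : Fin N,
            Tc (x k.castSucc i) (π i k.val (x k.castSucc i)) (x k.succ i))
      = ∏ i : Fin N, witnessP Tc Lc (π i) t (fun k => l k i) (x0 i) :=
  witness_probability_factorizes_general Tc Lc N π t l x0
end

section
/- (Finite-horizon value-function decomposition, Eq. (11).) Consider a homogeneous multi-agent system of N agents sharing a finite labeled controlled Markov chain (X_c, A_c, T_c, L_c : X_c → Σ_c) with row-stochastic T_c, per-agent time-varying policies π^i : ℕ → X_c → A_c, a horizon T ∈ ℕ, and an initial joint state x_0 : Fin N → X_c. Let W be a prefix-free set of nonempty finite words over the joint alphabet Σ := Fin N → Σ_c, each of length at most T+1. Then ∑_{x : Fin (T+1) → (Fin N → X_c), x 0 = x_0} χ[∃ t ≤ T, the finite word (k ↦ (i ↦ L_c(x k i)))_{k=0,…,t} belongs to W] · ∏_{k=0}^{T-1} ∏_{i} T_c(x k i, π^i(k)(x k i), x (k+1) i) = ∑_{w ∈ W} ∏_{i} P(w^i, x_0 i, π^i), where χ[·] is the 0/1 indicator and w^i denotes the projection of w to agent i, i.e., the word of the same length with k-th letter (w_k) i. -/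
open scoped Classical

/-- A set of finite words is prefix-free. -/
def PrefixFree {A : Type*} (W : Set (List A)) : Prop :=
  ∀ w ∈ W, ∀ w' ∈ W, ¬ ProperPrefix w w'

/-- Per-agent witness probability of a finite word `w` (as a list): the probability
that the controlled single-agent chain started at `y0` produces the labels of `w`
over its first `|w|` steps. -/
noncomputable def listWitnessP {Xc Ac Sc : Type*} [Fintype Xc]
    (Tc : Xc → Ac → Xc → NNReal) (Lc : Xc → Sc) (π : ℕ → Xc → Ac)
    (w : List Sc) (y0 : Xc) : NNReal :=
  ∑ y : Fin w.length → Xc,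
    (if (∀ h : 0 < w.length, y ⟨0, h⟩ = y0) ∧ (∀ k : Fin w.length, Lc (y k) = w.get k)
      then 1 else 0) *
      ∏ k : Fin (w.length - 1),
        Tc (y ⟨k.val, by have := k.isLt; omega⟩)
          (π k.val (y ⟨k.val, by have := k.isLt; omega⟩))
          (y ⟨k.val + 1, by have := k.isLt; omega⟩)


private lemma mul_ind (P Q : Prop) :
    (if P then (1:NNReal) else 0) * (if Q then 1 else 0) = if P ∧ Q then 1 else 0 := by
  by_cases hP : P <;> by_cases hQ : Q <;> simp [hP, hQ]

private lemma prod_ind {ι : Type*} [Fintype ι] (P : ι → Prop) :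
    (∏ i, (if P i then (1:NNReal) else 0)) = if ∀ i, P i then 1 else 0 := by
  by_cases h : ∀ i, P i
  · simp [h]
  · rw [if_neg h]
    push_neg at h
    obtain ⟨i, hi⟩ := h
    exact Finset.prod_eq_zero (Finset.mem_univ i) (by simp [hi])

private lemma properPrefix_take {α : Type*} (l : List α) (a b : ℕ) (ha : a < b)
    (hb : b ≤ l.length) : ProperPrefix (l.take a) (l.take b) := by
  refine ⟨(l.take b).drop a, ?_, ?_⟩
  · have hlen : ((l.take b).drop a).length = b - a := by
      simp [Nat.min_eq_left hb]
    intro hcon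
    rw [hcon] at hlen
    simp at hlen
    omega
  · conv_lhs => rw [← List.take_append_drop a (l.take b)]
    congr 1
    rw [List.take_take, Nat.min_eq_left (le_of_lt ha)]

private lemma extend_step {S : Type*} [Fintype S] (step : ℕ → S → S → NNReal)
    (h : ∀ k s, ∑ s', step k s s' = 1) (T : ℕ) (c : (Fin (T+1) → S) → NNReal) :
    (∑ x : Fin (T+2) → S, c (fun j => x j.castSucc) *
        ∏ k : Fin (T+1), step k (x k.castSucc) (x k.succ))
    = ∑ x : Fin (T+1) → S, c x * ∏ k : Fin T, step k (x k.castSucc) (x k.succ) := by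
  rw [← Equiv.sum_comp (Fin.snocEquiv (fun _ => S))]
  rw [Fintype.sum_prod_type_right]
  refine Finset.sum_congr rfl fun y _ => ?_
  have hrw : ∀ s : S, (c fun j => (Fin.snocEquiv (fun _ => S)) (s, y) j.castSucc) = c y := by
    intro s
    congr 1
    funext j
    simp [Fin.snocEquiv, Fin.snoc_castSucc]
  calc (∑ s : S, (c fun j => (Fin.snocEquiv (fun _ => S)) (s, y) j.castSucc) *
          ∏ k : Fin (T+1), step k ((Fin.snocEquiv (fun _ => S)) (s, y) k.castSucc)
            ((Fin.snocEquiv (fun _ => S)) (s, y) k.succ))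
      = ∑ s : S, c y * ((∏ k : Fin T, step k (y k.castSucc) (y k.succ)) * step T (y (Fin.last T)) s) := by
        refine Finset.sum_congr rfl fun s _ => ?_
        rw [hrw]
        simp only [Fin.snocEquiv_apply]
        congr 1
        rw [Fin.prod_univ_castSucc]
        congr 1
        · refine Finset.prod_congr rfl fun k _ => ?_
          congr 1
          · exact Fin.snoc_castSucc ..
          · have he : k.castSucc.succ = (k.succ).castSucc := Fin.ext rfl
            rw [he]
            exact Fin.snoc_castSucc ..
        · congr 1
          · exact Fin.snoc_castSucc ..
          · have he : (Fin.last T).succ = Fin.last (T+1) := Fin.ext rfl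
            rw [he]
            exact Fin.snoc_last ..
    _ = c y * ∏ k : Fin T, step k (y k.castSucc) (y k.succ) := by
        rw [← Finset.mul_sum, ← Finset.mul_sum, h, mul_one]

private lemma shrink {S : Type*} [Fintype S] (step : ℕ → S → S → NNReal)
    (h : ∀ k s, ∑ s', step k s s' = 1) :
    ∀ (T t : ℕ) (ht : t ≤ T) (c : (Fin (t+1) → S) → NNReal),
    (∑ x : Fin (T+1) → S, c (fun j => x (Fin.castLE (by omega) j)) *
        ∏ k : Fin T, step k (x k.castSucc) (x k.succ))
    = ∑ y : Fin (t+1) → S, c y * ∏ k : Fin t, step k (y k.castSucc) (y k.succ) := by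
  intro T
  induction T with
  | zero =>
    intro t ht c
    have ht0 : t = 0 := Nat.le_zero.mp ht
    subst ht0
    refine Finset.sum_congr rfl fun x _ => ?_
    congr 2
  | succ T ih =>
    intro t ht c
    rcases eq_or_lt_of_le ht with rfl | ht'
    · refine Finset.sum_congr rfl fun x _ => ?_
      congr 2
    · have ht2 : t ≤ T := by omega
      have key := extend_step step h (T := T)
        (c := fun x => c (fun j => x (Fin.castLE (by omega) j)))
      calc (∑ x : Fin (T+1+1) → S, c (fun j => x (Fin.castLE (by omega) j)) *
              ∏ k : Fin (T+1), step k (x k.castSucc) (x k.succ))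
          = ∑ x : Fin (T+2) → S,
              (fun z : Fin (T+1) → S => c (fun j => z (Fin.castLE (by omega) j)))
                (fun j => x j.castSucc) *
              ∏ k : Fin (T+1), step k (x k.castSucc) (x k.succ) := by
            refine Finset.sum_congr rfl fun x _ => ?_
            congr 2
        _ = ∑ x : Fin (T+1) → S, c (fun j => x (Fin.castLE (by omega) j)) *
              ∏ k : Fin T, step k (x k.castSucc) (x k.succ) := key
        _ = _ := ih t ht2 c

private lemma listWitnessP_eq {Xc Ac Sc : Type*} [Fintype Xc]
    (Tc : Xc → Ac → Xc → NNReal) (Lc : Xc → Sc) (π : ℕ → Xc → Ac)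
    (w : List Sc) (y0 : Xc) (m : ℕ) (hm : w.length = m + 1) :
    listWitnessP Tc Lc π w y0
    = ∑ y : Fin (m+1) → Xc,
        (if y 0 = y0 ∧ (∀ k : Fin (m+1), Lc (y k) = w.get (Fin.cast hm.symm k))
          then 1 else 0) *
        ∏ k : Fin m, Tc (y k.castSucc) (π k.val (y k.castSucc)) (y k.succ) := by
  rw [listWitnessP]
  refine Fintype.sum_equiv ((finCongr hm).arrowCongr (Equiv.refl Xc)) _ _ fun g => ?_
  have hg : ∀ k : Fin (m+1), ((finCongr hm).arrowCongr (Equiv.refl Xc)) g k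
      = g (Fin.cast hm.symm k) := fun k => rfl
  congr 1
  · refine if_congr ?_ rfl rfl
    constructor
    · rintro ⟨h0, hlab⟩
      refine ⟨?_, fun k => ?_⟩
      · rw [hg]
        exact h0 (by omega)
      · rw [hg]
        exact hlab _
    · rintro ⟨h0, hlab⟩
      refine ⟨fun hp => ?_, fun k => ?_⟩
      · have := h0
        rw [hg] at this
        have he : (⟨0, hp⟩ : Fin w.length) = Fin.cast hm.symm 0 := Fin.ext rfl
        rw [he]
        exact this
      · have := hlab (Fin.cast hm k)
        rw [hg] at this
        have he : Fin.cast hm.symm (Fin.cast hm k) = k := Fin.ext rfl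
        rw [he] at this
        exact this
  · refine Fintype.prod_equiv (finCongr (by omega : w.length - 1 = m)) _ _ fun k => ?_
    simp only [hg]
    have e1 : ∀ (a b : Fin w.length), a.val = b.val → g a = g b :=
      fun a b hab => congrArg g (Fin.ext hab)
    exact congrArg₂ (fun u v => Tc u (π k.val u) v) (e1 _ _ rfl) (e1 _ _ rfl)

private lemma prod_listWitnessP {Xc Ac Sc : Type*} [Fintype Xc]
    (Tc : Xc → Ac → Xc → NNReal) (Lc : Xc → Sc)
    (N : ℕ) (π : Fin N → ℕ → Xc → Ac) (x0 : Fin N → Xc)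
    (w : List (Fin N → Sc)) (m : ℕ) (hm : w.length = m + 1) :
    (∏ i : Fin N, listWitnessP Tc Lc (π i) (w.map fun σ => σ i) (x0 i))
    = ∑ y : Fin (m+1) → (Fin N → Xc),
        (if y 0 = x0 ∧ (∀ k : Fin (m+1), (fun i => Lc (y k i)) = w.get (Fin.cast hm.symm k))
          then 1 else 0) *
        ∏ k : Fin m, ∏ i : Fin N,
          Tc (y k.castSucc i) (π i k.val (y k.castSucc i)) (y k.succ i) := by
  have hmi : ∀ i : Fin N, (w.map fun σ => σ i).length = m + 1 := fun i => by
    rw [List.length_map]; exact hm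
  have step1 : (∏ i : Fin N, listWitnessP Tc Lc (π i) (w.map fun σ => σ i) (x0 i))
      = ∏ i : Fin N, ∑ yi : Fin (m+1) → Xc,
          (if yi 0 = x0 i ∧ (∀ k : Fin (m+1), Lc (yi k) = w.get (Fin.cast hm.symm k) i)
            then 1 else 0) *
          ∏ k : Fin m, Tc (yi k.castSucc) (π i k.val (yi k.castSucc)) (yi k.succ) := by
    refine Finset.prod_congr rfl fun i _ => ?_
    rw [listWitnessP_eq Tc Lc (π i) _ (x0 i) m (hmi i)]
    refine Finset.sum_congr rfl fun yi _ => ?_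
    congr 1
    refine if_congr (and_congr_right fun _ => ?_) rfl rfl
    refine forall_congr' fun k => ?_
    have : (w.map fun σ => σ i).get (Fin.cast (hmi i).symm k)
        = w.get (Fin.cast hm.symm k) i := by
      simp [List.get_eq_getElem, List.getElem_map]
    rw [this]
  rw [step1, Finset.prod_univ_sum]
  rw [Fintype.piFinset_univ]
  refine Fintype.sum_equiv
    (⟨Function.swap, Function.swap, fun _ => rfl, fun _ => rfl⟩ :
      (Fin N → Fin (m+1) → Xc) ≃ (Fin (m+1) → Fin N → Xc)) _ _ fun Y => ?_
  simp only [Equiv.coe_fn_mk]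
  rw [Finset.prod_mul_distrib]
  congr 1
  · by_cases hQ : Function.swap Y 0 = x0 ∧
        ∀ k : Fin (m+1), (fun i => Lc (Function.swap Y k i)) = w.get (Fin.cast hm.symm k)
    · rw [if_pos hQ]
      refine Finset.prod_eq_one fun i _ => ?_
      exact if_pos ⟨congrFun hQ.1 i, fun k => congrFun (hQ.2 k) i⟩
    · rw [if_neg hQ]
      have hex : ∃ i : Fin N,
          ¬ (Y i 0 = x0 i ∧ ∀ k : Fin (m+1), Lc (Y i k) = w.get (Fin.cast hm.symm k) i) := by
        by_contra hcon
        push_neg at hcon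
        exact hQ ⟨funext fun i => (hcon i).1, fun k => funext fun i => (hcon i).2 k⟩
      obtain ⟨i, hi⟩ := hex
      exact Finset.prod_eq_zero (Finset.mem_univ i) (if_neg hi)
  · exact Finset.prod_comm

theorem finite_horizon_value_decomposition {Xc Ac Sc : Type*} [Fintype Xc] [Fintype Sc]
    (Tc : Xc → Ac → Xc → NNReal) (Lc : Xc → Sc)
    (hrow : ∀ x a, ∑ x' : Xc, Tc x a x' = 1)
    (N : ℕ) (π : Fin N → ℕ → Xc → Ac) (T : ℕ) (x0 : Fin N → Xc)
    (W : Set (List (Fin N → Sc))) (hpf : PrefixFree W)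
    (hne : ∀ w ∈ W, w ≠ []) (hlen : ∀ w ∈ W, w.length ≤ T + 1) :
    (∑ x : Fin (T + 1) → Fin N → Xc,
        (if x 0 = x0 then 1 else 0) *
        (if ∃ t : ℕ, ∃ h : t ≤ T,
            (List.ofFn fun k : Fin (t + 1) =>
              fun i : Fin N => Lc (x (Fin.castLE (Nat.succ_le_succ h) k) i)) ∈ W
          then 1 else 0) *
        ∏ k : Fin T, ∏ i : Fin N,
          Tc (x k.castSucc i) (π i k.val (x k.castSucc i)) (x k.succ i))
      = ∑' w : W, ∏ i : Fin N,
          listWitnessP Tc Lc (π i) (w.val.map fun σ => σ i) (x0 i) := by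
  classical
  let step : ℕ → (Fin N → Xc) → (Fin N → Xc) → NNReal :=
    fun k u v => ∏ i, Tc (u i) (π i k (u i)) (v i)
  have hstep : ∀ k u, ∑ v, step k u v = 1 := by
    intro k u
    calc ∑ v : Fin N → Xc, ∏ i, Tc (u i) (π i k (u i)) (v i)
        = ∑ v ∈ Fintype.piFinset (fun _ : Fin N => (Finset.univ : Finset Xc)),
            ∏ i, Tc (u i) (π i k (u i)) (v i) := by rw [Fintype.piFinset_univ]
      _ = ∏ i, ∑ x' : Xc, Tc (u i) (π i k (u i)) x' := (Finset.prod_univ_sum _ _).symm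
      _ = 1 := by simp [hrow]
  let trace : (Fin (T+1) → Fin N → Xc) → List (Fin N → Sc) :=
    fun x => List.ofFn (fun j : Fin (T+1) => fun i => Lc (x j i))
  have htl : ∀ x, (trace x).length = T + 1 := fun x => by simp [trace]
  have hWfin : W.Finite :=
    (List.finite_length_le (Fin N → Sc) (T+1)).subset (fun w hw => hlen w hw)
  have hofFn : ∀ (x : Fin (T+1) → Fin N → Xc) (t : ℕ) (h : t ≤ T),
      (List.ofFn fun k : Fin (t+1) =>
        fun i => Lc (x (Fin.castLE (Nat.succ_le_succ h) k) i)) = (trace x).take (t+1) :=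
    fun x t h =>
      Fin.ofFn_take_eq_take_ofFn (Nat.succ_le_succ h) (fun j : Fin (T+1) => fun i => Lc (x j i))
  -- Step A: indicator decomposition
  have stepA : ∀ x : Fin (T+1) → Fin N → Xc,
      (if ∃ t : ℕ, ∃ h : t ≤ T,
          (List.ofFn fun k : Fin (t+1) =>
            fun i => Lc (x (Fin.castLE (Nat.succ_le_succ h) k) i)) ∈ W
        then (1:NNReal) else 0)
      = ∑ w ∈ hWfin.toFinset, if w = (trace x).take w.length then 1 else 0 := by
    intro x
    by_cases hex : ∃ t : ℕ, ∃ h : t ≤ T,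
        (List.ofFn fun k : Fin (t+1) =>
          fun i => Lc (x (Fin.castLE (Nat.succ_le_succ h) k) i)) ∈ W
    · rw [if_pos hex]
      obtain ⟨t, ht, hw⟩ := hex
      rw [hofFn x t ht] at hw
      have hplen : ((trace x).take (t+1)).length = t + 1 := by
        rw [List.length_take, htl x, Nat.min_eq_left (by omega)]
      rw [Finset.sum_eq_single_of_mem ((trace x).take (t+1)) (hWfin.mem_toFinset.mpr hw)]
      · rw [if_pos (by rw [hplen])]
      · intro b hb hbp
        rw [if_neg]
        intro hcon
        have hbW : b ∈ W := hWfin.mem_toFinset.mp hb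
        have hblen : b.length ≤ T + 1 := hlen b hbW
        rcases lt_trichotomy b.length (t+1) with hlt | heq | hgt
        · have hppf := properPrefix_take (trace x) b.length (t+1) hlt
            (by rw [htl x]; omega)
          rw [← hcon] at hppf
          exact hpf b hbW _ hw hppf
        · exact hbp (by rw [hcon, heq])
        · have hppf := properPrefix_take (trace x) (t+1) b.length hgt
            (by rw [htl x]; omega)
          rw [← hcon] at hppf
          exact hpf _ hw b hbW hppf
    · rw [if_neg hex]
      symm
      refine Finset.sum_eq_zero fun b hb => ?_
      rw [if_neg]
      intro hcon
      apply hex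
      have hbW : b ∈ W := hWfin.mem_toFinset.mp hb
      obtain ⟨m, hm⟩ : ∃ m, b.length = m + 1 :=
        Nat.exists_eq_succ_of_ne_zero (fun h0 => hne b hbW (List.length_eq_zero_iff.mp h0))
      have hmT : m ≤ T := by have := hlen b hbW; omega
      refine ⟨m, hmT, ?_⟩
      rw [hofFn x m hmT, ← hm, ← hcon]
      exact hbW
  -- main chain
  calc (∑ x : Fin (T + 1) → Fin N → Xc,
        (if x 0 = x0 then 1 else 0) *
        (if ∃ t : ℕ, ∃ h : t ≤ T,
            (List.ofFn fun k : Fin (t + 1) =>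
              fun i : Fin N => Lc (x (Fin.castLE (Nat.succ_le_succ h) k) i)) ∈ W
          then 1 else 0) *
        ∏ k : Fin T, ∏ i : Fin N,
          Tc (x k.castSucc i) (π i k.val (x k.castSucc i)) (x k.succ i))
      = ∑ x : Fin (T + 1) → Fin N → Xc, ∑ w ∈ hWfin.toFinset,
          (if x 0 = x0 then 1 else 0) * (if w = (trace x).take w.length then 1 else 0) *
          ∏ k : Fin T, step k (x k.castSucc) (x k.succ) := by
        refine Finset.sum_congr rfl fun x _ => ?_
        rw [stepA x, Finset.mul_sum, Finset.sum_mul]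
    _ = ∑ w ∈ hWfin.toFinset, ∑ x : Fin (T + 1) → Fin N → Xc,
          (if x 0 = x0 then 1 else 0) * (if w = (trace x).take w.length then 1 else 0) *
          ∏ k : Fin T, step k (x k.castSucc) (x k.succ) := Finset.sum_comm
    _ = ∑ w ∈ hWfin.toFinset, ∏ i : Fin N,
          listWitnessP Tc Lc (π i) (w.map fun σ => σ i) (x0 i) := by
        refine Finset.sum_congr rfl fun w hw => ?_
        have hbW : w ∈ W := hWfin.mem_toFinset.mp hw
        obtain ⟨m, hm⟩ : ∃ m, w.length = m + 1 :=
          Nat.exists_eq_succ_of_ne_zero (fun h0 => hne w hbW (List.length_eq_zero_iff.mp h0))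
        have hmT : m ≤ T := by have := hlen w hbW; omega
        have hTake : ∀ x : Fin (T+1) → Fin N → Xc,
            (x 0 = x0 ∧ w = (trace x).take w.length) ↔
            (x (Fin.castLE (by omega : m+1 ≤ T+1) (0 : Fin (m+1))) = x0 ∧
              ∀ k : Fin (m+1),
                (fun i => Lc (x (Fin.castLE (by omega : m+1 ≤ T+1) k) i))
                  = w.get (Fin.cast hm.symm k)) := by
          intro x
          have hgetTake : ∀ (n : ℕ) (hn : n < w.length),
              ((trace x).take w.length)[n]'(by rw [List.length_take, htl x]; omega)
                = fun i => Lc (x ⟨n, by omega⟩ i) := by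
            intro n hn
            simp only [List.getElem_take, trace, List.getElem_ofFn]
          constructor
          · rintro ⟨h0, hcon⟩
            refine ⟨?_, fun k => ?_⟩
            · rw [show (Fin.castLE (by omega : m+1 ≤ T+1) (0 : Fin (m+1))) = 0 from
                Fin.ext (by simp)]
              exact h0
            · have e1 : w.get (Fin.cast hm.symm k) = w[(k:ℕ)]'(by omega) := rfl
              have e2 : w[(k:ℕ)]'(by omega) =
                  ((trace x).take w.length)[(k:ℕ)]'(by rw [List.length_take, htl x]; omega) :=
                List.getElem_of_eq hcon _
              rw [e1, e2, hgetTake k (by omega)]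
              funext i
              exact congrArg (fun z => Lc (z i)) (congrArg x (Fin.ext rfl))
          · rintro ⟨h0, hlab⟩
            refine ⟨?_, ?_⟩
            · rw [show (0 : Fin (T+1)) = Fin.castLE (by omega) (0 : Fin (m+1)) from
                Fin.ext (by simp)]
              exact h0
            · refine List.ext_getElem ?_ fun n h1 h2 => ?_
              · simp only [List.length_take, htl x]
                omega
              · have hn : n < m + 1 := by rw [hm] at h1; exact h1
                have hthis := hlab ⟨n, hn⟩
                rw [hgetTake n (by omega)]
                exact hthis.symm
        calc (∑ x : Fin (T + 1) → Fin N → Xc,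
              (if x 0 = x0 then 1 else 0) * (if w = (trace x).take w.length then 1 else 0) *
              ∏ k : Fin T, step k (x k.castSucc) (x k.succ))
            = ∑ x : Fin (T + 1) → Fin N → Xc,
              (if x (Fin.castLE (by omega : m+1 ≤ T+1) (0 : Fin (m+1))) = x0 ∧
                  (∀ k : Fin (m+1),
                    (fun i => Lc (x (Fin.castLE (by omega : m+1 ≤ T+1) k) i))
                      = w.get (Fin.cast hm.symm k)) then 1 else 0) *
              ∏ k : Fin T, step k (x k.castSucc) (x k.succ) := by
              refine Finset.sum_congr rfl fun x _ => ?_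
              refine congrArg₂ (· * ·) ?_ rfl
              by_cases hP : x 0 = x0 <;> by_cases hQ : w = (trace x).take w.length
              · rw [if_pos hP, if_pos hQ, if_pos ((hTake x).mp ⟨hP, hQ⟩), one_mul]
              · rw [if_pos hP, if_neg hQ, if_neg (fun hc => hQ (((hTake x).mpr hc).2)), mul_zero]
              · rw [if_neg hP, if_neg (fun hc => hP (((hTake x).mpr hc).1)), zero_mul]
              · rw [if_neg hP, if_neg (fun hc => hP (((hTake x).mpr hc).1)), zero_mul]
          _ = ∑ y : Fin (m+1) → Fin N → Xc,
              (if y 0 = x0 ∧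
                  (∀ k : Fin (m+1), (fun i => Lc (y k i)) = w.get (Fin.cast hm.symm k))
                then 1 else 0) *
              ∏ k : Fin m, step k (y k.castSucc) (y k.succ) :=
              shrink step hstep T m hmT
                (fun y => if y 0 = x0 ∧
                    (∀ k : Fin (m+1), (fun i => Lc (y k i)) = w.get (Fin.cast hm.symm k))
                  then 1 else 0)
          _ = ∏ i : Fin N, listWitnessP Tc Lc (π i) (w.map fun σ => σ i) (x0 i) :=
              (prod_listWitnessP Tc Lc N π x0 w m hm).symm
    _ = ∑' w : W, ∏ i : Fin N,
          listWitnessP Tc Lc (π i) (w.val.map fun σ => σ i) (x0 i) := by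
        haveI : Fintype ↥W := hWfin.fintype
        rw [tsum_fintype]
        rw [← Finset.sum_coe_sort hWfin.toFinset
          (fun w => ∏ i, listWitnessP Tc Lc (π i) (w.map fun σ => σ i) (x0 i))]
        exact Fintype.sum_equiv
          (Equiv.subtypeEquivRight fun b => by simp [Set.Finite.mem_toFinset]) _ _
          (fun b => rfl)
end
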